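/- Let n ≥ 2. In ℤⁿ with standard basis e_1, …, e_n, set α_k = e_k − e_{k+1} for 1 ≤ k ≤ n−1 and α_n = e_n. Then the sum of the vectors e_i − e_j and e_i + e_j over all pairs 1 ≤ i < j ≤ n, together with the vectors e_i over all 1 ≤ i ≤ n, equals Σ_{i=1}^{n} (2n − 2i + 1)·e_i, which equals Σ_{k=1}^{n} k(2n − k)·α_k; moreover k(2n − k) ≡ k (mod 2) for every k, so in particular this sum is not divisible by 2 in the subgroup of ℤⁿ generated by α_1, …, α_n. -/
import Mathlib

private lemma stmt9_cIoi (n : ℕ) (x : Fin n) :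
    (∑ j : Fin n, if x < j then (1:ℤ) else 0) = (n:ℤ) - 1 - (x:ℕ) := by
  rw [Finset.sum_boole, Finset.filter_lt_eq_Ioi, Fin.card_Ioi]
  have := x.isLt; push_cast [Nat.cast_sub, Nat.sub_sub]; omega

private lemma stmt9_cIio (n : ℕ) (x : Fin n) :
    (∑ j : Fin n, if j < x then (1:ℤ) else 0) = (x:ℕ) := by
  rw [Finset.sum_boole, Finset.filter_gt_eq_Iio, Fin.card_Iio]

private lemma stmt9_T1 (n : ℕ) (x : Fin n) :
    (∑ i : Fin n, ∑ j : Fin n, if i < j then (if x = i then (1:ℤ) else 0) else 0)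
      = (n:ℤ) - 1 - (x:ℕ) := by
  have h : ∀ i : Fin n, (∑ j : Fin n, if i < j then (if x = i then (1:ℤ) else 0) else 0)
      = if x = i then (n:ℤ) - 1 - (i:ℕ) else 0 := by
    intro i
    by_cases h : x = i
    · simp only [h, if_pos rfl]; exact stmt9_cIoi n i
    · simp [h]
  rw [Finset.sum_congr rfl fun i _ => h i, Finset.sum_ite_eq, if_pos (Finset.mem_univ x)]

private lemma stmt9_T2 (n : ℕ) (x : Fin n) :
    (∑ i : Fin n, ∑ j : Fin n, if i < j then (if x = j then (1:ℤ) else 0) else 0)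
      = ((x:ℕ) : ℤ) := by
  rw [Finset.sum_comm]
  have h : ∀ j : Fin n, (∑ i : Fin n, if i < j then (if x = j then (1:ℤ) else 0) else 0)
      = if x = j then ((j:ℕ) : ℤ) else 0 := by
    intro j
    by_cases h : x = j
    · simp only [h, if_pos rfl]; exact stmt9_cIio n j
    · simp [h]
  rw [Finset.sum_congr rfl fun j _ => h j, Finset.sum_ite_eq, if_pos (Finset.mem_univ x)]

/-!
STATEMENT 9: In ℤⁿ (realized as `Fin n → ℤ`, n ≥ 2) with standard basis `e i = Pi.single i 1`
(where `i : Fin n` represents the 1-indexed index `i+1`), let α_k = e_k − e_{k+1} for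
1 ≤ k ≤ n−1 and α_n = e_n (the simple roots of B_n).  Then the sum of the positive roots
e_i − e_j, e_i + e_j (i < j) and e_i equals Σ_i (2n − 2i + 1)·e_i = Σ_k k(2n − k)·α_k;
moreover k(2n − k) ≡ k (mod 2) for every k, and the sum is not divisible by 2 in the
subgroup of ℤⁿ generated by α_1, …, α_n.
-/
theorem stmt9 (n : ℕ) (hn : 2 ≤ n)
    (α : Fin n → (Fin n → ℤ))
    (hα : ∀ k : Fin n, α k =
      if h : (k : ℕ) + 1 < n then
        (Pi.single k 1 : Fin n → ℤ) - Pi.single (⟨(k : ℕ) + 1, h⟩ : Fin n) 1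
      else (Pi.single k 1 : Fin n → ℤ)) :
    ((∑ p ∈ Finset.univ.filter (fun p : Fin n × Fin n => p.1 < p.2),
        ((Pi.single p.1 1 : Fin n → ℤ) - Pi.single p.2 1))
      + (∑ p ∈ Finset.univ.filter (fun p : Fin n × Fin n => p.1 < p.2),
        ((Pi.single p.1 1 : Fin n → ℤ) + Pi.single p.2 1))
      + ∑ i : Fin n, (Pi.single i 1 : Fin n → ℤ)
      = ∑ i : Fin n, ((2 * (n : ℤ) - 2 * ((i : ℕ) + 1) + 1)) • (Pi.single i 1 : Fin n → ℤ))
    ∧ ((∑ i : Fin n, ((2 * (n : ℤ) - 2 * ((i : ℕ) + 1) + 1)) • (Pi.single i 1 : Fin n → ℤ))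
      = ∑ k : Fin n, ((((k : ℕ) + 1 : ℤ)) * (2 * (n : ℤ) - ((k : ℕ) + 1))) • α k)
    ∧ (∀ k : Fin n, (((k : ℕ) + 1) * (2 * n - ((k : ℕ) + 1))) ≡ ((k : ℕ) + 1) [MOD 2])
    ∧ ¬ (∃ w ∈ Submodule.span ℤ (Set.range α),
          (∑ i : Fin n, ((2 * (n : ℤ) - 2 * ((i : ℕ) + 1) + 1)) • (Pi.single i 1 : Fin n → ℤ))
            = 2 • w) := by
  refine ⟨?_, ?_, ?_, ?_⟩
  · -- Part 1: sum of positive roots equals Σ (2n − 2i − 1)·e_i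
    funext x
    simp only [Finset.sum_apply, Pi.add_apply, Pi.sub_apply, Pi.smul_apply, Pi.single_apply,
      smul_eq_mul, mul_ite, mul_one, mul_zero, Finset.sum_filter, Fintype.sum_prod_type,
      apply_ite (fun f : Fin n → ℤ => f x), Pi.zero_apply]
    have hsub : ∀ (c : Prop) [Decidable c] (a b : ℤ),
        (if c then a - b else 0) = (if c then a else 0) - (if c then b else 0) := by
      intros c _ a b; split <;> simp
    have hadd : ∀ (c : Prop) [Decidable c] (a b : ℤ),
        (if c then a + b else 0) = (if c then a else 0) + (if c then b else 0) := by
      intros c _ a b; split <;> simp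
    simp only [hsub, hadd, Finset.sum_sub_distrib, Finset.sum_add_distrib]
    rw [stmt9_T1, stmt9_T2]
    simp only [Finset.sum_ite_eq, Finset.mem_univ, if_true]
    ring
  · -- Part 2: Σ (2n − 2i − 1)·e_i = Σ k(2n−k)·α_k
    funext x
    have hval : ∀ k : Fin n, α k x
        = (if (x:ℕ) = (k:ℕ) then (1:ℤ) else 0) - (if (x:ℕ) = (k:ℕ) + 1 then 1 else 0) := by
      intro k
      rw [hα k]
      split
      · simp [Pi.single_apply, Fin.ext_iff]
      · have h2 : (x:ℕ) ≠ (k:ℕ) + 1 := by have := x.isLt; have := k.isLt; omega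
        simp [Pi.single_apply, Fin.ext_iff, h2]
    simp only [Finset.sum_apply, Pi.smul_apply, Pi.single_apply, smul_eq_mul, mul_ite, mul_one,
      mul_zero, Finset.sum_ite_eq, Finset.mem_univ, if_true, hval, mul_sub,
      Finset.sum_sub_distrib]
    have h1 : (∑ k : Fin n, if (x:ℕ) = (k:ℕ) then
          ((((k:ℕ):ℤ) + 1) * (2 * (n:ℤ)) - (((k:ℕ):ℤ) + 1) * (((k:ℕ):ℤ) + 1)) else 0)
        = ((((x:ℕ):ℤ) + 1) * (2 * (n:ℤ)) - (((x:ℕ):ℤ) + 1) * (((x:ℕ):ℤ) + 1)) := by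
      simp only [Fin.val_inj, Finset.sum_ite_eq, Finset.mem_univ, if_true]
    rw [h1]
    rcases Nat.eq_zero_or_pos (x:ℕ) with hx | hx
    · have h2 : (∑ k : Fin n, if (x:ℕ) = (k:ℕ) + 1 then
            ((((k:ℕ):ℤ) + 1) * (2 * (n:ℤ)) - (((k:ℕ):ℤ) + 1) * (((k:ℕ):ℤ) + 1)) else 0) = 0 := by
        apply Finset.sum_eq_zero
        intro k _
        rw [if_neg]; omega
      rw [h2, hx]; push_cast; ring
    · set k0 : Fin n := ⟨(x:ℕ) - 1, by have := x.isLt; omega⟩ with hk0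
      have h2 : (∑ k : Fin n, if (x:ℕ) = (k:ℕ) + 1 then
            ((((k:ℕ):ℤ) + 1) * (2 * (n:ℤ)) - (((k:ℕ):ℤ) + 1) * (((k:ℕ):ℤ) + 1)) else 0)
          = ((((k0:ℕ):ℤ) + 1) * (2 * (n:ℤ)) - (((k0:ℕ):ℤ) + 1) * (((k0:ℕ):ℤ) + 1)) := by
        rw [Finset.sum_eq_single_of_mem k0 (Finset.mem_univ _) ?h0, if_pos ?hp]
        case h0 =>
          intro b _ hb
          rw [if_neg]
          intro h
          exact hb (Fin.ext (by simp only [hk0]; omega))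
        case hp => simp only [hk0]; omega
      have hc : (((k0:ℕ) : ℤ)) + 1 = ((x:ℕ) : ℤ) := by
        simp only [hk0]; push_cast [Nat.cast_sub hx]; ring
      rw [h2, hc]
      ring
  · -- Part 3: k(2n − k) ≡ k (mod 2)
    intro k
    have hk : (k:ℕ) + 1 ≤ n := k.isLt
    set m := (k:ℕ) + 1 with hm
    have h1 : m ≤ m * (2 * n - m) := by
      have : 1 ≤ 2 * n - m := by omega
      calc m = m * 1 := (mul_one m).symm
      _ ≤ m * (2 * n - m) := Nat.mul_le_mul_left m this
    rw [Nat.ModEq.comm, Nat.modEq_iff_dvd' h1]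
    have : m * (2 * n - m) - m = m * (2 * n - m - 1) := by
      obtain ⟨t, ht1, ht2⟩ : ∃ t, 2 * n - m = t + 1 ∧ 2 * n - m - 1 = t :=
        ⟨2 * n - m - 1, by omega, rfl⟩
      rw [ht1, Nat.add_sub_cancel, Nat.mul_succ, Nat.add_sub_cancel]
    rw [this]
    rcases Nat.even_or_odd m with ⟨a, ha⟩ | ⟨a, ha⟩
    · exact Dvd.dvd.mul_right (by omega) _
    · refine Dvd.dvd.mul_left ?_ _
      omega
  · -- Part 4: the sum is not twice an element of the span
    rintro ⟨w, -, heq⟩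
    have h0 : (0 : ℕ) < n := by omega
    have := congrFun heq ⟨0, h0⟩
    simp only [Finset.sum_apply, Pi.smul_apply, Pi.single_apply, smul_eq_mul, mul_ite, mul_one,
      mul_zero, Finset.sum_ite_eq, Finset.mem_univ, if_true, nsmul_eq_mul, Nat.cast_ofNat] at this
    omega
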